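/- arXiv:2310.05609 — 2 statements merged into one kernel-verified Lean document; each statement's English description precedes it below -/
import Mathlib

section
/- For every even integer n ≥ 4, the edge-locating chromatic number of the complete graph K_n equals n + 1. -/
open SimpleGraph

/-- Distance from a vertex to an edge: the minimum of the distances to the two endpoints. -/
noncomputable def edgeDist {V : Type*} (G : SimpleGraph V) (v : V) (e : Sym2 V) : ℕ :=
  Sym2.lift ⟨fun x y => min (G.dist v x) (G.dist v y), fun _ _ => min_comm _ _⟩ e

/-- Distance (in `ℕ∞`) from a vertex to the `i`-th color class of an edge coloring `c`
(it is `⊤` if the class is empty). -/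
noncomputable def classDist {V : Type*} (G : SimpleGraph V) {k : ℕ} (c : Sym2 V → Fin k)
    (v : V) (i : Fin k) : ℕ∞ :=
  ⨅ e ∈ {e | e ∈ G.edgeSet ∧ c e = i}, (edgeDist G v e : ℕ∞)

/-- `c` is an edge-locating `k`-coloring of `G`: it is a proper edge coloring (distinct edges
sharing an endpoint get different colors), and distinct vertices have distinct edge color codes
`(d(v, C_1), …, d(v, C_k))`. -/
def IsEdgeLocatingColoring {V : Type*} (G : SimpleGraph V) {k : ℕ} (c : Sym2 V → Fin k) : Prop :=
  (∀ e ∈ G.edgeSet, ∀ f ∈ G.edgeSet, e ≠ f → (∃ x, x ∈ e ∧ x ∈ f) → c e ≠ c f) ∧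
  (∀ u v : V, u ≠ v → ∃ i, classDist G c u i ≠ classDist G c v i)

/-- The edge-locating chromatic number `χ'_L(G)`: the least `k` such that `G` admits an
edge-locating `k`-coloring. -/
noncomputable def edgeLocatingChromaticNumber {V : Type*} (G : SimpleGraph V) : ℕ :=
  sInf {k | ∃ c : Sym2 V → Fin k, IsEdgeLocatingColoring G c}

/-- The join `G + H` of two graphs: all edges of `G`, all edges of `H`, and all edges between
a vertex of `G` and a vertex of `H`. -/
def graphJoin {α β : Type*} (G : SimpleGraph α) (H : SimpleGraph β) : SimpleGraph (α ⊕ β) :=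
  SimpleGraph.fromRel (fun x y =>
    (∃ a b, x = Sum.inl a ∧ y = Sum.inl b ∧ G.Adj a b) ∨
    (∃ a b, x = Sum.inr a ∧ y = Sum.inr b ∧ H.Adj a b) ∨
    (∃ a b, x = Sum.inl a ∧ y = Sum.inr b))

/-- A set `M` of edges of `G` forming a matching: pairwise vertex-disjoint edges of `G`. -/
def IsMatchingSet {V : Type*} (G : SimpleGraph V) (M : Set (Sym2 V)) : Prop :=
  M ⊆ G.edgeSet ∧ ∀ e ∈ M, ∀ f ∈ M, e ≠ f → ∀ x, x ∈ e → x ∉ f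

/-!
In `K_n` a vertex is at distance `0` from the colour classes it meets and at distance `1` from
every other nonempty class, so a proper edge colouring is locating exactly when the sets of
colours seen at the vertices are pairwise distinct; each of these sets has `n - 1` elements.
With `n - 1` colours all of them are the full set of colours. With `n` colours every vertex
misses exactly one colour and distinct vertices miss distinct colours, so some colour is seen at
exactly `n - 1` vertices, which is odd, while a colour class is a matching.

For `n + 1` colours, colour the edge `ab` of `K_{n+1}` on `ZMod (n + 1)` by `a + b` (vertex `a`
then misses only `2a`), delete the vertices `0` and `1`, and add a new vertex `0` joined to each
`a` in colour `2a`. Now a vertex `a ≠ 0` misses exactly the colours `a, a + 1` and the new vertex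
misses `0, 2`; these pairs are distinct because `2` is invertible and `3 ≠ 0`.
-/

section

variable {V α : Type*}

def IsProperEdgeColoring (G : SimpleGraph V) (c : Sym2 V → α) : Prop :=
  ∀ e ∈ G.edgeSet, ∀ f ∈ G.edgeSet, e ≠ f → (∃ x, x ∈ e ∧ x ∈ f) → c e ≠ c f

def incidentColors (G : SimpleGraph V) (c : Sym2 V → α) (v : V) : Set α :=
  {i | ∃ w, G.Adj v w ∧ c s(v, w) = i}

theorem isProperEdgeColoring_top_iff {c : Sym2 V → α} :
    IsProperEdgeColoring ⊤ c ↔ ∀ v, Set.InjOn (fun w => c s(v, w)) {v}ᶜ := by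
  constructor
  · intro hc v w hw w' hw' hcw
    by_contra hne
    refine hc s(v, w) (by simpa [eq_comm] using hw) s(v, w') (by simpa [eq_comm] using hw')
      (fun h => hne (Sym2.congr_right.1 h)) ⟨v, by simp, by simp⟩ hcw
  · rintro hc e he f hf hef ⟨x, hxe, hxf⟩ hcef
    obtain ⟨w, rfl⟩ := Sym2.mem_iff_exists.1 hxe
    obtain ⟨w', rfl⟩ := Sym2.mem_iff_exists.1 hxf
    simp only [mem_edgeSet, top_adj] at he hf
    exact hef (congrArg _ (hc x he.symm hf.symm hcef))

theorem notMem_of_notMem_incidentColors {G : SimpleGraph V} {c : Sym2 V → α} {v : V} {i : α}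
    (hv : i ∉ incidentColors G c v) {e : Sym2 V} (he : e ∈ G.edgeSet) (hce : c e = i) : v ∉ e := by
  rintro hve
  obtain ⟨w, rfl⟩ := Sym2.mem_iff_exists.1 hve
  exact hv ⟨w, he, hce⟩

theorem classDist_eq_zero {G : SimpleGraph V} {k : ℕ} {c : Sym2 V → Fin k} {v : V} {i : Fin k}
    (hi : i ∈ incidentColors G c v) : classDist G c v i = 0 := by
  obtain ⟨w, hvw, rfl⟩ := hi
  refine nonpos_iff_eq_zero.1 (iInf₂_le_of_le s(v, w) ⟨hvw, rfl⟩ ?_)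
  simp [edgeDist]

theorem edgeDist_top_of_notMem {v : V} {e : Sym2 V} (hv : v ∉ e) : edgeDist ⊤ v e = 1 := by
  induction e with
  | _ x y =>
    simp only [Sym2.mem_iff, not_or] at hv
    simp [edgeDist, dist_eq_one_iff_adj.2, hv.1, hv.2]

theorem classDist_top_of_notMem {k : ℕ} {c : Sym2 V → Fin k} {v : V} {i : Fin k}
    (hv : i ∉ incidentColors ⊤ c v) :
    classDist ⊤ c v i = ⨅ e ∈ {e | e ∈ (⊤ : SimpleGraph V).edgeSet ∧ c e = i}, (1 : ℕ∞) := by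
  refine iInf_congr fun e => iInf_congr fun he => ?_
  rw [edgeDist_top_of_notMem (notMem_of_notMem_incidentColors hv he.1 he.2), Nat.cast_one]

theorem classDist_top_ne_zero {k : ℕ} {c : Sym2 V → Fin k} {v : V} {i : Fin k}
    (hv : i ∉ incidentColors ⊤ c v) : classDist ⊤ c v i ≠ 0 := by
  rw [classDist_top_of_notMem hv, ← Order.one_le_iff_ne_zero]
  exact le_iInf₂ fun _ _ => le_rfl

theorem isEdgeLocatingColoring_top_iff {k : ℕ} {c : Sym2 V → Fin k} :
    IsEdgeLocatingColoring ⊤ c ↔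
      IsProperEdgeColoring ⊤ c ∧ Function.Injective (incidentColors ⊤ c) := by
  refine and_congr_right fun _ => ⟨fun hloc u v huv => ?_, fun hinj u v huv => ?_⟩
  · by_contra hne
    obtain ⟨i, hi⟩ := hloc u v hne
    by_cases hiu : i ∈ incidentColors ⊤ c u
    · exact hi ((classDist_eq_zero hiu).trans (classDist_eq_zero (huv ▸ hiu)).symm)
    · exact hi ((classDist_top_of_notMem hiu).trans (classDist_top_of_notMem (huv ▸ hiu)).symm)
  · obtain ⟨i, hi⟩ := not_forall.1 (mt Set.ext (mt (@hinj u v) huv))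
    refine ⟨i, ?_⟩
    by_cases hiu : i ∈ incidentColors ⊤ c u
    · rw [classDist_eq_zero hiu]
      exact (classDist_top_ne_zero (by tauto)).symm
    · rw [classDist_eq_zero (by tauto : i ∈ incidentColors ⊤ c v)]
      exact classDist_top_ne_zero hiu

def colorClassGraph (G : SimpleGraph V) (c : Sym2 V → α) (i : α) : SimpleGraph V where
  Adj v w := G.Adj v w ∧ c s(v, w) = i
  symm.symm _ _ h := ⟨h.1.symm, Sym2.eq_swap ▸ h.2⟩
  loopless.irrefl _ h := h.1.ne rfl

theorem IsProperEdgeColoring.even_ncard_incidentColors [Finite V] {G : SimpleGraph V}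
    {c : Sym2 V → α} (hc : IsProperEdgeColoring G c) (i : α) :
    Even {v | i ∈ incidentColors G c v}.ncard := by
  classical
  have := Fintype.ofFinite V
  set H := colorClassGraph G c i
  have hdeg : ∀ v, H.degree v ≤ 1 := fun v => by
    refine (card_neighborFinset_eq_degree H v).symm.trans_le (Finset.card_le_one.2 ?_)
    intro w hw w' hw'
    obtain ⟨hvw, hcw⟩ := (mem_neighborFinset H v w).1 hw
    obtain ⟨hvw', hcw'⟩ := (mem_neighborFinset H v w').1 hw'
    by_contra hne
    exact hc _ hvw _ hvw' (fun h => hne (Sym2.congr_right.1 h)) ⟨v, Sym2.mem_mk_left v w,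
      Sym2.mem_mk_left v w'⟩ (hcw.trans hcw'.symm)
  have hodd : ∀ v, Odd (H.degree v) ↔ i ∈ incidentColors G c v := fun v => by
    change Odd (H.degree v) ↔ ∃ w, H.Adj v w
    rw [Nat.odd_iff, ← degree_pos_iff_exists_adj]
    have := hdeg v
    omega
  convert H.even_card_odd_degree_vertices using 1
  rw [← Set.ncard_coe_finset]
  congr 1
  ext v
  simp [hodd]

theorem IsProperEdgeColoring.ncard_incidentColors_top [Finite V] {c : Sym2 V → α}
    (hc : IsProperEdgeColoring ⊤ c) (v : V) :
    (incidentColors ⊤ c v).ncard = Nat.card V - 1 := by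
  have himage : incidentColors ⊤ c v = (fun w => c s(v, w)) '' {v}ᶜ := by
    ext i
    simp [incidentColors, eq_comm]
  rw [himage, (isProperEdgeColoring_top_iff.1 hc v).ncard_image, Set.ncard_compl,
    Set.ncard_singleton]

theorem IsEdgeLocatingColoring.card_add_one_le [Finite V] [Nonempty V] {k : ℕ}
    {c : Sym2 V → Fin k} (hc : IsEdgeLocatingColoring ⊤ c) (heven : Even (Nat.card V)) :
    Nat.card V + 1 ≤ k := by
  obtain ⟨hprop, hinj⟩ := isEdgeLocatingColoring_top_iff.1 hc
  have hcard := hprop.ncard_incidentColors_top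
  have hpos : 0 < Nat.card V := Nat.card_pos
  inhabit V
  have hle : Nat.card V - 1 ≤ k := by
    simpa [hcard] using Set.ncard_le_card (incidentColors ⊤ c default)
  by_contra! hlt
  obtain hk | hk : k = Nat.card V - 1 ∨ k = Nat.card V := by omega
  · have huniv : ∀ v, incidentColors ⊤ c v = Set.univ := fun v => by
      rw [Set.eq_univ_iff_ncard, hcard, Nat.card_fin, hk]
    have : Nontrivial V := Finite.one_lt_card_iff_nontrivial.1 (by
      obtain ⟨m, hm⟩ := heven; omega)
    obtain ⟨u, v, huv⟩ := exists_pair_ne V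
    exact huv (hinj ((huniv u).trans (huniv v).symm))
  · have hmissing : ∀ v, ∃ j, (incidentColors ⊤ c v)ᶜ = {j} := fun v => by
      rw [← Set.ncard_eq_one, Set.ncard_compl, hcard, Nat.card_fin]
      omega
    choose m hm using hmissing
    have hmem : ∀ v, m default ∈ incidentColors ⊤ c v ↔ v ≠ default := fun v => by
      rw [← Set.notMem_compl_iff, hm, Set.mem_singleton_iff, not_iff_not]
      exact ⟨fun h => hinj (compl_injective ((hm v).trans (h ▸ hm default).symm)),
        fun h => h ▸ rfl⟩
    have hodd := hprop.even_ncard_incidentColors (m default)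
    simp only [hmem] at hodd
    rw [← Set.compl_singleton_eq, Set.ncard_compl, Set.ncard_singleton] at hodd
    obtain ⟨r, hr⟩ := heven
    obtain ⟨s, hs⟩ := hodd
    omega

section SumColor

variable {R : Type*} [CommRing R] [DecidableEq R]

def sumColor (a b : R) : R :=
  if a = 0 then 2 * b else if b = 0 then 2 * a else a + b

theorem sumColor_comm (a b : R) : sumColor a b = sumColor b a := by
  unfold sumColor
  split_ifs <;> simp_all [add_comm]

def missingColors (a : R) : Set R :=
  if a = 0 then {0, 2} else {a, a + 1}

theorem sumColor_injOn (h2 : IsUnit (2 : R)) (a : R) : Set.InjOn (sumColor a) {a}ᶜ := by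
  intro b hb b' hb' h
  simp only [Set.mem_compl_iff, Set.mem_singleton_iff] at hb hb'
  unfold sumColor at h
  split_ifs at h <;> first | exact h2.mul_left_cancel h | grind

theorem exists_sumColor_eq_iff (h2 : IsUnit (2 : R)) {a : R} (ha : a ≠ 1) (j : R) :
    (∃ b, b ≠ 1 ∧ b ≠ a ∧ sumColor a b = j) ↔ j ∉ missingColors a := by
  unfold missingColors sumColor
  split_ifs with ha0
  all_goals simp only [Set.mem_insert_iff, Set.mem_singleton_iff, not_or]
  · subst ha0
    constructor
    · rintro ⟨b, hb1, hb0, rfl⟩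
      exact ⟨fun h => hb0 (h2.mul_left_cancel (by rw [h, mul_zero])),
        fun h => hb1 (h2.mul_left_cancel (by rw [h, mul_one]))⟩
    · rintro ⟨hj0, hj2⟩
      obtain ⟨u, hu⟩ := h2.exists_right_inv
      exact ⟨u * j, by grind, by grind, by grind⟩
  · constructor
    · rintro ⟨b, hb1, hba, rfl⟩
      split_ifs <;> grind
    · rintro ⟨hja, hja1⟩
      by_cases hj : j = 2 * a
      · exact ⟨0, fun h => ha0 (by rw [← mul_one a, ← h, mul_zero]), Ne.symm ha0, by simp [hj]⟩
      · exact ⟨j - a, by grind, by grind, by grind⟩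

theorem missingColors_injective (h2 : (2 : R) ≠ 0) (h3 : (3 : R) ≠ 0) :
    Function.Injective (missingColors : R → Set R) := by
  intro a a' h
  have hmem : ∀ x, x ∈ missingColors a ↔ x ∈ missingColors a' := fun x => by rw [h]
  have h0 := hmem 0
  have h2' := hmem 2
  have ha := hmem a
  have ha' := hmem a'
  unfold missingColors at h0 h2' ha ha'
  split_ifs at h0 h2' ha ha' <;>
    simp only [Set.mem_insert_iff, Set.mem_singleton_iff] at h0 h2' ha ha' <;> grind

def sumColoring (f : V → R) : Sym2 V → R :=
  Sym2.lift ⟨fun v w => sumColor (f v) (f w), fun _ _ => sumColor_comm _ _⟩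

theorem isProperEdgeColoring_sumColoring (h2 : IsUnit (2 : R)) {f : V → R}
    (hf : Function.Injective f) : IsProperEdgeColoring ⊤ (sumColoring f) := by
  refine isProperEdgeColoring_top_iff.2 fun v w hw w' hw' h => hf ?_
  exact sumColor_injOn h2 (f v) (hf.ne hw) (hf.ne hw') h

theorem incidentColors_sumColoring (h2 : IsUnit (2 : R)) (f : V ≃ {x : R // x ≠ 1}) (v : V) :
    incidentColors ⊤ (sumColoring fun v => (f v : R)) v = (missingColors (f v : R))ᶜ := by
  ext j
  rw [Set.mem_compl_iff, ← exists_sumColor_eq_iff h2 (f v).2]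
  constructor
  · rintro ⟨w, hvw, rfl⟩
    exact ⟨f w, (f w).2, fun h => hvw (f.injective (Subtype.ext h)).symm, rfl⟩
  · rintro ⟨b, hb1, hbv, rfl⟩
    refine ⟨f.symm ⟨b, hb1⟩, fun h => hbv ?_, by simp [sumColoring]⟩
    subst h
    simp

theorem injective_incidentColors_sumColoring (h2 : IsUnit (2 : R)) (h3 : (3 : R) ≠ 0)
    (f : V ≃ {x : R // x ≠ 1}) :
    Function.Injective (incidentColors ⊤ (sumColoring fun v => (f v : R))) := by
  have : Nontrivial R := ⟨⟨3, 0, h3⟩⟩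
  intro u v h
  rw [incidentColors_sumColoring h2, incidentColors_sumColoring h2] at h
  exact f.injective (Subtype.ext (missingColors_injective h2.ne_zero h3 (compl_injective h)))

end SumColor

end

theorem exists_isEdgeLocatingColoring_top_fin {n : ℕ} (hn : 4 ≤ n) (heven : Even n) :
    ∃ c : Sym2 (Fin n) → Fin (n + 1), IsEdgeLocatingColoring ⊤ c := by
  have h2 : IsUnit (2 : ZMod (n + 1)) := by
    simpa using (ZMod.isUnit_iff_coprime 2 (n + 1)).2 (Nat.coprime_two_left.2 heven.add_one)
  have h3 : (3 : ZMod (n + 1)) ≠ 0 := by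
    have : ((3 : ℕ) : ZMod (n + 1)) ≠ 0 := by
      rw [Ne, ZMod.natCast_eq_zero_iff]
      exact fun h => absurd (Nat.le_of_dvd three_pos h) (by omega)
    exact_mod_cast this
  have hcard : Fintype.card (Fin n) = Fintype.card {x : ZMod (n + 1) // x ≠ 1} := by
    simp [Fintype.card_subtype_compl]
  let f := Fintype.equivOfCardEq hcard
  -- `ZMod (n + 1)` is definitionally `Fin (n + 1)`.
  refine ⟨sumColoring (R := ZMod (n + 1)) fun v => f v, isEdgeLocatingColoring_top_iff.2
    ⟨isProperEdgeColoring_sumColoring h2 (Subtype.val_injective.comp f.injective),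
      injective_incidentColors_sumColoring h2 h3 f⟩⟩

/-- For every even integer `n ≥ 4`, the edge-locating chromatic number of `K_n` is `n + 1`. -/
theorem stmt_7 (n : ℕ) (hn : 4 ≤ n) (heven : Even n) :
    edgeLocatingChromaticNumber (⊤ : SimpleGraph (Fin n)) = n + 1 := by
  have hupper := exists_isEdgeLocatingColoring_top_fin hn heven
  have : Nonempty (Fin n) := ⟨⟨0, by omega⟩⟩
  refine le_antisymm (Nat.sInf_le hupper) (le_csInf ⟨_, hupper⟩ ?_)
  rintro k ⟨c, hc⟩
  simpa using hc.card_add_one_le (by simpa using heven)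
end

section
/- Let G be a finite simple connected graph of order n ≥ 5 and size m. If G has a perfect matching, then χ'_L(G) ≤ m − n/2 + 1. -/
open SimpleGraph

section helpers

variable {V : Type*} [Fintype V] {G : SimpleGraph V}

private lemma closed_walk (T : Set V) (hT : ∀ x ∈ T, ∀ y, G.Adj x y → y ∈ T)
    {a b : V} (w : G.Walk a b) (ha : a ∈ T) : b ∈ T := by
  induction w with
  | nil => exact ha
  | cons h _ ih => exact ih (hT _ ha _ h)

private lemma edgeDist_mk (v a b : V) :
    edgeDist G v s(a, b) = min (G.dist v a) (G.dist v b) := rfl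

private lemma edgeDist_eq_zero_iff (hG : G.Connected) {v : V} {e : Sym2 V} :
    edgeDist G v e = 0 ↔ v ∈ e := by
  induction e using Sym2.ind with
  | _ a b =>
    rw [edgeDist_mk, Nat.min_eq_zero_iff, Sym2.mem_iff]
    constructor
    · rintro (h | h)
      · rcases SimpleGraph.dist_eq_zero_iff_eq_or_not_reachable.mp h with h' | h'
        · exact Or.inl h'
        · exact absurd (hG.preconnected _ _) h'
      · rcases SimpleGraph.dist_eq_zero_iff_eq_or_not_reachable.mp h with h' | h'
        · exact Or.inr h'
        · exact absurd (hG.preconnected _ _) h'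
    · rintro (rfl | rfl)
      · exact Or.inl SimpleGraph.dist_self
      · exact Or.inr SimpleGraph.dist_self

private lemma card_le_of_closed (hG : G.Connected) (T : Set V) (u : V) (hu : u ∈ T)
    (hT : ∀ x ∈ T, ∀ y, G.Adj x y → y ∈ T) : Fintype.card V ≤ T.ncard := by
  have huniv : (Set.univ : Set V) ⊆ T := fun x _ =>
    closed_walk T hT ((hG.preconnected u x).some) hu
  calc Fintype.card V = (Set.univ : Set V).ncard := by
        rw [Set.ncard_univ, Nat.card_eq_fintype_card]
    _ ≤ T.ncard := Set.ncard_le_ncard huniv (Set.toFinite T)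

private lemma card_le_two_mul (M : Set (Sym2 V))
    (hperf : ∀ v : V, ∃ e ∈ M, v ∈ e) : Fintype.card V ≤ 2 * M.ncard := by
  classical
  have hMfin : M.Finite := Set.toFinite M
  have hsub : (Finset.univ : Finset V) ⊆ hMfin.toFinset.biUnion
      (fun e => (Set.toFinite {x : V | x ∈ e}).toFinset) := by
    intro v _
    obtain ⟨e, heM, hv⟩ := hperf v
    exact Finset.mem_biUnion.mpr ⟨e, hMfin.mem_toFinset.mpr heM,
      (Set.Finite.mem_toFinset _).mpr hv⟩
  have h2 : ∀ e ∈ hMfin.toFinset, ((Set.toFinite {x : V | x ∈ e}).toFinset).card ≤ 2 := by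
    intro e _
    induction e using Sym2.ind with
    | _ a b =>
      have hsub2 : (Set.toFinite {x : V | x ∈ s(a, b)}).toFinset ⊆ {a, b} := by
        intro x hx
        simp only [Set.Finite.mem_toFinset, Set.mem_setOf_eq, Sym2.mem_iff] at hx
        simpa using hx
      calc _ ≤ ({a, b} : Finset V).card := Finset.card_le_card hsub2
        _ ≤ 2 := (Finset.card_insert_le _ _).trans (by simp)
  calc Fintype.card V = (Finset.univ : Finset V).card := rfl
    _ ≤ _ := Finset.card_le_card hsub
    _ ≤ ∑ e ∈ hMfin.toFinset, ((Set.toFinite {x : V | x ∈ e}).toFinset).card :=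
        Finset.card_biUnion_le
    _ ≤ ∑ _e ∈ hMfin.toFinset, 2 := Finset.sum_le_sum h2
    _ = 2 * M.ncard := by
        rw [Finset.sum_const, smul_eq_mul, ← Set.ncard_eq_toFinset_card M hMfin]; ring

end helpers

/-- If a finite simple connected graph `G` of order `n ≥ 5` and size `m` has a perfect matching,
then `χ'_L(G) ≤ m - n/2 + 1`. -/
theorem stmt_11 {V : Type*} [Fintype V] (G : SimpleGraph V) (hG : G.Connected)
    (n m : ℕ) (hn : n = Fintype.card V) (hn5 : 5 ≤ n) (hm : m = G.edgeSet.ncard)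
    (M : Set (Sym2 V)) (hM : IsMatchingSet G M) (hperf : ∀ v : V, ∃ e ∈ M, v ∈ e) :
    edgeLocatingChromaticNumber G ≤ m - n / 2 + 1 := by
  classical
  obtain ⟨hMsub, hMdisj⟩ := hM
  have hEfin : G.edgeSet.Finite := Set.toFinite _
  set S : Set (Sym2 V) := G.edgeSet \ M with hSdef
  have hSfin : S.Finite := Set.toFinite _
  haveI : Fintype S := hSfin.fintype
  have hcardS : Fintype.card S = S.ncard := by
    rw [Set.ncard_eq_toFinset_card', Set.toFinset_card]
  let φ : S ≃ Fin S.ncard := (Fintype.equivFin S).trans (finCongr hcardS)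
  let c : Sym2 V → Fin (S.ncard + 1) := fun e => if h : e ∈ S then (φ ⟨e, h⟩).succ else 0
  have hc_ne : ∀ {e} (h : e ∈ S), c e = (φ ⟨e, h⟩).succ := fun h => dif_pos h
  have hc0 : ∀ {e}, e ∉ S → c e = 0 := fun h => dif_neg h
  have hclass : ∀ e, e ∈ S → {f | f ∈ G.edgeSet ∧ c f = c e} = {e} := by
    intro e he
    ext f
    simp only [Set.mem_setOf_eq, Set.mem_singleton_iff]
    constructor
    · rintro ⟨hfE, hcf⟩
      by_cases hfS : f ∈ S
      · rw [hc_ne hfS, hc_ne he] at hcf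
        exact Subtype.ext_iff.mp (φ.injective (Fin.succ_injective _ hcf))
      · rw [hc0 hfS, hc_ne he] at hcf
        exact absurd hcf.symm (Fin.succ_ne_zero _)
    · rintro rfl; exact ⟨he.1, rfl⟩
  have hclassDist : ∀ (w : V) e, e ∈ S → classDist G c w (c e) = (edgeDist G w e : ℕ∞) := by
    intro w e he
    unfold classDist
    rw [hclass e he]
    exact iInf_singleton
  have hproper : ∀ e ∈ G.edgeSet, ∀ f ∈ G.edgeSet, e ≠ f →
      (∃ x, x ∈ e ∧ x ∈ f) → c e ≠ c f := by
    rintro e he f hf hef ⟨x, hxe, hxf⟩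
    by_cases heS : e ∈ S <;> by_cases hfS : f ∈ S
    · rw [hc_ne heS, hc_ne hfS]
      intro h
      exact hef (Subtype.ext_iff.mp (φ.injective (Fin.succ_injective _ h)))
    · rw [hc_ne heS, hc0 hfS]; exact Fin.succ_ne_zero _
    · rw [hc0 heS, hc_ne hfS]; exact (Fin.succ_ne_zero _).symm
    · have heM : e ∈ M := by by_contra h; exact heS ⟨he, h⟩
      have hfM : f ∈ M := by by_contra h; exact hfS ⟨hf, h⟩
      exact absurd hxf (hMdisj e heM f hfM hef x hxe)
  have hloc : ∀ u v : V, u ≠ v → ∃ i, classDist G c u i ≠ classDist G c v i := by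
    intro u v huv
    by_contra hcon
    push_neg at hcon
    have key : ∀ e ∈ S, edgeDist G u e = edgeDist G v e := by
      intro e he
      have h := hcon (c e)
      rw [hclassDist u e he, hclassDist v e he] at h
      exact_mod_cast h
    have memiff : ∀ e ∈ S, (u ∈ e ↔ v ∈ e) := by
      intro e he
      rw [← edgeDist_eq_zero_iff hG, ← edgeDist_eq_zero_iff hG, key e he]
    obtain ⟨eu, heuM, hueu⟩ := hperf u
    obtain ⟨ev, hevM, hvev⟩ := hperf v
    set u' := Sym2.Mem.other' hueu with hu'def
    set v' := Sym2.Mem.other' hvev with hv'def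
    have hspecu : s(u, u') = eu := Sym2.other_spec' hueu
    have hspecv : s(v, v') = ev := Sym2.other_spec' hvev
    have hadjuu' : G.Adj u u' := by rw [← SimpleGraph.mem_edgeSet, hspecu]; exact hMsub heuM
    have hadjvv' : G.Adj v v' := by rw [← SimpleGraph.mem_edgeSet, hspecv]; exact hMsub hevM
    have huu' : u ≠ u' := G.ne_of_adj hadjuu'
    have hvv' : v ≠ v' := G.ne_of_adj hadjvv'
    have hMeq : ∀ e ∈ M, ∀ f ∈ M, (∃ x, x ∈ e ∧ x ∈ f) → e = f := by
      rintro e he f hf ⟨x, hxe, hxf⟩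
      by_contra hne
      exact hMdisj e he f hf hne x hxe hxf
    have hNu : ∀ w, G.Adj u w → w = u' ∨ w = v := by
      intro w hw
      by_cases hwM : s(u, w) ∈ M
      · left
        have h1 : s(u, w) = eu := hMeq _ hwM _ heuM ⟨u, by simp, hueu⟩
        rw [← hspecu] at h1
        exact Sym2.congr_right.mp h1
      · right
        have heS : s(u, w) ∈ S := ⟨G.mem_edgeSet.mpr hw, hwM⟩
        have hv : v ∈ s(u, w) := (memiff _ heS).mp (by simp)
        rcases Sym2.mem_iff.mp hv with h | h
        · exact absurd h.symm huv
        · exact h.symm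
    have hNv : ∀ w, G.Adj v w → w = v' ∨ w = u := by
      intro w hw
      by_cases hwM : s(v, w) ∈ M
      · left
        have h1 : s(v, w) = ev := hMeq _ hwM _ hevM ⟨v, by simp, hvev⟩
        rw [← hspecv] at h1
        exact Sym2.congr_right.mp h1
      · right
        have heS : s(v, w) ∈ S := ⟨G.mem_edgeSet.mpr hw, hwM⟩
        have hu : u ∈ s(v, w) := (memiff _ heS).mpr (by simp)
        rcases Sym2.mem_iff.mp hu with h | h
        · exact absurd h huv
        · exact h.symm
    by_cases heuv : eu = ev
    · -- eu = ev : component is {u, v}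
      have hvu' : v = u' := by
        have hv : v ∈ s(u, u') := by rw [hspecu, heuv]; exact hvev
        rcases Sym2.mem_iff.mp hv with h | h
        · exact absurd h huv.symm
        · exact h
      have huv' : u = v' := by
        have hu : u ∈ s(v, v') := by rw [hspecv, ← heuv]; exact hueu
        rcases Sym2.mem_iff.mp hu with h | h
        · exact absurd h huv
        · exact h
      have hclosed : ∀ x ∈ ({u, v} : Set V), ∀ y, G.Adj x y → y ∈ ({u, v} : Set V) := by
        intro x hx y hy
        simp only [Set.mem_insert_iff, Set.mem_singleton_iff] at hx ⊢
        rcases hx with rfl | rfl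
        · rcases hNu y hy with rfl | rfl
          · exact Or.inr hvu'.symm
          · exact Or.inr rfl
        · rcases hNv y hy with rfl | rfl
          · exact Or.inl huv'.symm
          · exact Or.inl rfl
      have h1 := card_le_of_closed hG {u, v} u (by simp) hclosed
      have h2 : ({u, v} : Set V).ncard ≤ 2 := by
        have a1 := Set.ncard_insert_le u ({v} : Set V)
        have a2 : ({v} : Set V).ncard = 1 := Set.ncard_singleton _
        omega
      omega
    · -- eu ≠ ev : component is {u, v, u', v'}
      have hdisj2 : ∀ x, x ∈ eu → x ∉ ev := hMdisj eu heuM ev hevM heuv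
      have hu'mem : u' ∈ eu := by rw [← hspecu]; simp
      have hv'mem : v' ∈ ev := by rw [← hspecv]; simp
      have hu'v : u' ≠ v := fun h => hdisj2 u' hu'mem (h ▸ hvev)
      have hu'v' : u' ≠ v' := fun h => hdisj2 u' hu'mem (h ▸ hv'mem)
      have huv'2 : u ≠ v' := fun h => hdisj2 u hueu (h ▸ hv'mem)
      have hNu' : ∀ w, G.Adj u' w → w = u ∨ w = v' := by
        intro w hw
        by_cases hwM : s(u', w) ∈ M
        · left
          have h1 : s(u', w) = eu := hMeq _ hwM _ heuM ⟨u', by simp, hu'mem⟩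
          have h2 : s(u', w) = s(u', u) := by rw [h1, ← hspecu, Sym2.eq_swap]
          exact Sym2.congr_right.mp h2
        · right
          have heS : s(u', w) ∈ S := ⟨G.mem_edgeSet.mpr hw, hwM⟩
          have hwu : w ≠ u := by
            rintro rfl
            exact hwM (by rwa [Sym2.eq_swap, hspecu])
          have huNe : u ∉ s(u', w) := by
            rw [Sym2.mem_iff]; push_neg; exact ⟨huu', fun h => hwu h.symm⟩
          have hdu : edgeDist G u s(u', w) = 1 := by
            rw [edgeDist_mk]
            have d1 : G.dist u u' = 1 := SimpleGraph.dist_eq_one_iff_adj.mpr hadjuu'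
            have d2 : 0 < G.dist u w := hG.pos_dist_of_ne (fun h => hwu h.symm)
            omega
          have hdv : edgeDist G v s(u', w) = 1 := by rw [← key _ heS]; exact hdu
          rw [edgeDist_mk] at hdv
          have hone : G.dist v u' = 1 ∨ G.dist v w = 1 := by omega
          rcases hone with h | h
          · rcases hNv u' (SimpleGraph.dist_eq_one_iff_adj.mp h) with h' | h'
            · exact absurd h' hu'v'
            · exact absurd h' huu'.symm
          · rcases hNv w (SimpleGraph.dist_eq_one_iff_adj.mp h) with h' | h'
            · exact h'
            · exact absurd h' hwu
      have hNv' : ∀ w, G.Adj v' w → w = v ∨ w = u' := by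
        intro w hw
        by_cases hwM : s(v', w) ∈ M
        · left
          have h1 : s(v', w) = ev := hMeq _ hwM _ hevM ⟨v', by simp, hv'mem⟩
          have h2 : s(v', w) = s(v', v) := by rw [h1, ← hspecv, Sym2.eq_swap]
          exact Sym2.congr_right.mp h2
        · right
          have heS : s(v', w) ∈ S := ⟨G.mem_edgeSet.mpr hw, hwM⟩
          have hwv : w ≠ v := by
            rintro rfl
            exact hwM (by rwa [Sym2.eq_swap, hspecv])
          have hvNe : v ∉ s(v', w) := by
            rw [Sym2.mem_iff]; push_neg; exact ⟨hvv', fun h => hwv h.symm⟩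
          have hdv : edgeDist G v s(v', w) = 1 := by
            rw [edgeDist_mk]
            have d1 : G.dist v v' = 1 := SimpleGraph.dist_eq_one_iff_adj.mpr hadjvv'
            have d2 : 0 < G.dist v w := hG.pos_dist_of_ne (fun h => hwv h.symm)
            omega
          have hdu : edgeDist G u s(v', w) = 1 := by rw [key _ heS]; exact hdv
          rw [edgeDist_mk] at hdu
          have hone : G.dist u v' = 1 ∨ G.dist u w = 1 := by omega
          rcases hone with h | h
          · rcases hNu v' (SimpleGraph.dist_eq_one_iff_adj.mp h) with h' | h'
            · exact absurd h'.symm hu'v'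
            · exact absurd h'.symm hvv'
          · rcases hNu w (SimpleGraph.dist_eq_one_iff_adj.mp h) with h' | h'
            · exact h'
            · exact absurd h' hwv
      have hclosed : ∀ x ∈ ({u, v, u', v'} : Set V), ∀ y, G.Adj x y →
          y ∈ ({u, v, u', v'} : Set V) := by
        intro x hx y hy
        simp only [Set.mem_insert_iff, Set.mem_singleton_iff] at hx ⊢
        rcases hx with rfl | rfl | rfl | rfl
        · rcases hNu y hy with rfl | rfl <;> tauto
        · rcases hNv y hy with rfl | rfl <;> tauto
        · rcases hNu' y hy with rfl | rfl <;> tauto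
        · rcases hNv' y hy with rfl | rfl <;> tauto
      have h1 := card_le_of_closed hG {u, v, u', v'} u (by simp) hclosed
      have h2 : ({u, v, u', v'} : Set V).ncard ≤ 4 := by
        have a1 := Set.ncard_insert_le u ({v, u', v'} : Set V)
        have a2 := Set.ncard_insert_le v ({u', v'} : Set V)
        have a3 := Set.ncard_insert_le u' ({v'} : Set V)
        have a4 : ({v'} : Set V).ncard = 1 := Set.ncard_singleton _
        omega
      omega
  have hmem : (S.ncard + 1) ∈ {k | ∃ c : Sym2 V → Fin k, IsEdgeLocatingColoring G c} :=
    ⟨c, hproper, hloc⟩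
  have h1 : edgeLocatingChromaticNumber G ≤ S.ncard + 1 := Nat.sInf_le hmem
  have hSn : S.ncard = m - M.ncard := by
    rw [hSdef, Set.ncard_diff hMsub (Set.toFinite M), ← hm]
  have hMn : n ≤ 2 * M.ncard := by rw [hn]; exact card_le_two_mul M hperf
  have hMm : M.ncard ≤ m := by rw [hm]; exact Set.ncard_le_ncard hMsub hEfin
  refine h1.trans ?_
  omega
end
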